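/- arXiv:1702.00550 — 6 statements merged into one kernel-verified Lean document; each statement's English description precedes it below -/
import Mathlib

section
/- Let c ≥ 0 and ζ ∈ ℂ with ζ ∉ [c,∞), write ψ = arg(ζ − c) ∈ (0,2π). Then for every real x ≥ c: if |ζ − c| < 1 one has x/|x − ζ|² ≤ (c + 1)·c(ψ)²·|ζ − c|⁻², and if |ζ − c| ≥ 1 one has x/|x − ζ|² ≤ (c + 1)·c(ψ)²·|ζ − c|⁻¹. -/
/-!
Put `z = ζ - c = r e^{iψ}` and `t = x - c ≥ 0`, so that `|x - ζ| = |t - z|`. The point `t` of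
the half-line `[0, ∞)` and the point `z` of the ray of angle `ψ` both lie within distance
`c(ψ) |t - z|` of the origin: for `cos ψ ≤ 0` the angle at `0` in the triangle `0, t, z` is
obtuse, and otherwise `|sin ψ| t` and `|sin ψ| r` are distances from `t` to the line `ℝ z` and
from `z` to the real axis. With `M = c(ψ) |t - z| ≥ max(t, r)`, both bounds then follow from
`x = t + c ≤ (c + 1) max(1, t)`.
-/

open Real

/-- The coefficient `c(ψ)` from the paper, for `ψ ∈ (0, 2π)`:
`c(ψ) = 1/|sin ψ|` if `ψ ∈ (0, π/2) ∪ (3π/2, 2π)`, and `c(ψ) = 1` if `ψ ∈ [π/2, 3π/2]`. -/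
noncomputable def cArg (ψ : ℝ) : ℝ :=
  if (0 < ψ ∧ ψ < Real.pi / 2) ∨ (3 * Real.pi / 2 < ψ ∧ ψ < 2 * Real.pi) then
    |Real.sin ψ|⁻¹
  else 1

section Geometry

variable (t r ψ : ℝ)

theorem norm_ofReal_sub_polar_sq :
    ‖(t : ℂ) - r * Complex.exp (ψ * Complex.I)‖ ^ 2 = (t - r * cos ψ) ^ 2 + (r * sin ψ) ^ 2 := by
  have hpolar : (t : ℂ) - r * Complex.exp (ψ * Complex.I)
      = ((t - r * cos ψ : ℝ) : ℂ) + ((-(r * sin ψ) : ℝ) : ℂ) * Complex.I := by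
    rw [Complex.exp_mul_I, ← Complex.ofReal_cos, ← Complex.ofReal_sin]
    push_cast
    ring
  rw [hpolar, Complex.sq_norm, Complex.normSq_add_mul_I, neg_sq]

theorem abs_mul_sin_le_norm_ofReal_sub_polar_left :
    |t * sin ψ| ≤ ‖(t : ℂ) - r * Complex.exp (ψ * Complex.I)‖ := by
  refine abs_le_of_sq_le_sq ?_ (norm_nonneg _)
  rw [norm_ofReal_sub_polar_sq]
  linear_combination sq_nonneg (t * cos ψ - r) + (t ^ 2 - r ^ 2) * sin_sq_add_cos_sq ψ

theorem abs_mul_sin_le_norm_ofReal_sub_polar_right :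
    |r * sin ψ| ≤ ‖(t : ℂ) - r * Complex.exp (ψ * Complex.I)‖ := by
  refine abs_le_of_sq_le_sq ?_ (norm_nonneg _)
  rw [norm_ofReal_sub_polar_sq]
  nlinarith [sq_nonneg (t - r * cos ψ)]

variable {t r ψ}

theorem max_le_norm_ofReal_sub_polar_of_cos_nonpos (ht : 0 ≤ t) (hr : 0 ≤ r)
    (hcos : cos ψ ≤ 0) : max t r ≤ ‖(t : ℂ) - r * Complex.exp (ψ * Complex.I)‖ := by
  have hsq : ‖(t : ℂ) - r * Complex.exp (ψ * Complex.I)‖ ^ 2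
      = t ^ 2 + r ^ 2 - 2 * t * r * cos ψ := by
    rw [norm_ofReal_sub_polar_sq]
    linear_combination r ^ 2 * sin_sq_add_cos_sq ψ
  have hcross : 0 ≤ -(2 * t * r * cos ψ) := by
    have := mul_nonneg (mul_nonneg ht hr) (neg_nonneg.2 hcos)
    linarith
  refine max_le (le_of_sq_le_sq ?_ (norm_nonneg _)) (le_of_sq_le_sq ?_ (norm_nonneg _)) <;>
    nlinarith [sq_nonneg t, sq_nonneg r]

theorem max_le_cArg_mul_norm_ofReal_sub_polar (ht : 0 ≤ t) (hr : 0 ≤ r)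
    (hψ : ψ ∈ Set.Ioo 0 (2 * π)) :
    max t r ≤ cArg ψ * ‖(t : ℂ) - r * Complex.exp (ψ * Complex.I)‖ := by
  unfold cArg
  split_ifs with hcase
  · have hsin : 0 < |sin ψ| := by
      rcases hcase with ⟨h0, hπ⟩ | ⟨hπ, h2π⟩
      · exact abs_pos_of_pos (sin_pos_of_pos_of_lt_pi h0 (by linarith [pi_pos]))
      · have hneg : sin (ψ - 2 * π) < 0 :=
          sin_neg_of_neg_of_neg_pi_lt (by linarith) (by linarith [pi_pos])
        rw [sin_sub_two_pi] at hneg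
        exact abs_pos_of_neg hneg
    rw [inv_mul_eq_div, le_div_iff₀ hsin]
    have htsin := abs_mul_sin_le_norm_ofReal_sub_polar_left t r ψ
    have hrsin := abs_mul_sin_le_norm_ofReal_sub_polar_right t r ψ
    rw [abs_mul, abs_of_nonneg ht] at htsin
    rw [abs_mul, abs_of_nonneg hr] at hrsin
    rw [max_mul_of_nonneg _ _ hsin.le]
    exact max_le htsin hrsin
  · push Not at hcase
    have hcos : cos ψ ≤ 0 := by
      refine cos_nonpos_of_pi_div_two_le_of_le (hcase.1 hψ.1) ?_
      by_contra! h
      linarith [hcase.2 (by linarith), hψ.2]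
    rw [one_mul]
    exact max_le_norm_ofReal_sub_polar_of_cos_nonpos ht hr hcos

end Geometry

section Arithmetic

variable {t c r M : ℝ}

theorem add_le_mul_max_one (hc : 0 ≤ c) : t + c ≤ (c + 1) * max 1 t := by
  nlinarith [le_max_left 1 t, le_max_right 1 t]

theorem add_mul_sq_le_of_lt_one (ht : 0 ≤ t) (hc : 0 ≤ c) (hr : 0 ≤ r) (htM : t ≤ M)
    (hrM : r ≤ M) (hr1 : r < 1) : (t + c) * r ^ 2 ≤ (c + 1) * M ^ 2 := by
  have hmax : r ^ 2 * max 1 t ≤ M ^ 2 := by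
    rcases le_total t 1 with h | h
    · rw [max_eq_left h, mul_one]
      exact pow_le_pow_left₀ hr hrM 2
    · rw [max_eq_right h]
      calc r ^ 2 * t ≤ 1 * t := by gcongr; exact pow_le_one₀ hr hr1.le
        _ ≤ t ^ 2 := by nlinarith
        _ ≤ M ^ 2 := pow_le_pow_left₀ ht htM 2
  calc (t + c) * r ^ 2 ≤ (c + 1) * max 1 t * r ^ 2 := by
        gcongr
        exact add_le_mul_max_one hc
    _ ≤ (c + 1) * M ^ 2 := by nlinarith

theorem add_mul_le_of_one_le (ht : 0 ≤ t) (hc : 0 ≤ c) (htM : t ≤ M) (hrM : r ≤ M)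
    (hr1 : 1 ≤ r) : (t + c) * r ≤ (c + 1) * M ^ 2 := by
  calc (t + c) * r ≤ (c + 1) * max 1 t * r := by
        gcongr
        exact add_le_mul_max_one hc
    _ ≤ (c + 1) * M * M := by
        have hM1 : max 1 t ≤ M := max_le (hr1.trans hrM) htM
        exact mul_le_mul (by gcongr) hrM (by linarith) (by nlinarith)
    _ = (c + 1) * M ^ 2 := by ring

end Arithmetic

/-- For `c ≥ 0`, `ζ ∈ ℂ \ [c,∞)` with `ψ = arg(ζ − c) ∈ (0, 2π)`, and every real `x ≥ c`:
if `|ζ − c| < 1` then `x/|x − ζ|² ≤ (c+1) c(ψ)² |ζ − c|⁻²`, and if `|ζ − c| ≥ 1` then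
`x/|x − ζ|² ≤ (c+1) c(ψ)² |ζ − c|⁻¹`. -/
theorem sup_x_div_abs_sq (c : ℝ) (hc : 0 ≤ c) (ζ : ℂ) (ψ : ℝ)
    (hζ : ∀ x : ℝ, c ≤ x → ζ ≠ (x : ℂ))
    (hψ : ψ ∈ Set.Ioo (0 : ℝ) (2 * Real.pi))
    (hζψ : ζ - (c : ℂ) = ((‖ζ - (c : ℂ)‖ : ℝ) : ℂ) * Complex.exp ((ψ : ℂ) * Complex.I)) :
    ∀ x : ℝ, c ≤ x →
      (‖ζ - (c : ℂ)‖ < 1 →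
        x / ‖(x : ℂ) - ζ‖ ^ 2
          ≤ (c + 1) * cArg ψ ^ 2 * (‖ζ - (c : ℂ)‖)⁻¹ ^ 2) ∧
      (1 ≤ ‖ζ - (c : ℂ)‖ →
        x / ‖(x : ℂ) - ζ‖ ^ 2
          ≤ (c + 1) * cArg ψ ^ 2 * (‖ζ - (c : ℂ)‖)⁻¹) := by
  intro x hx
  set r := ‖ζ - (c : ℂ)‖
  have hr : 0 < r := norm_pos_iff.2 (sub_ne_zero.2 (hζ c le_rfl))
  have hd : 0 < ‖(x : ℂ) - ζ‖ := norm_pos_iff.2 (sub_ne_zero.2 (hζ x hx).symm)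
  have ht : 0 ≤ x - c := sub_nonneg.2 hx
  have hdist : (x : ℂ) - ζ = ((x - c : ℝ) : ℂ) - r * Complex.exp (ψ * Complex.I) := by
    rw [← hζψ]; push_cast; ring
  have hM := max_le_cArg_mul_norm_ofReal_sub_polar ht hr.le hψ
  rw [← hdist, max_le_iff] at hM
  obtain ⟨htM, hrM⟩ := hM
  constructor
  · intro hr1
    rw [inv_pow, ← div_eq_mul_inv, div_le_div_iff₀ (by positivity) (by positivity), mul_assoc,
      ← mul_pow]
    simpa only [sub_add_cancel] using add_mul_sq_le_of_lt_one ht hc hr.le htM hrM hr1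
  · intro hr1
    rw [← div_eq_mul_inv, div_le_div_iff₀ (by positivity) hr, mul_assoc, ← mul_pow]
    simpa only [sub_add_cancel] using add_mul_le_of_one_le ht hc htM hrM hr1
end

section
/- Let c ≥ 0 and ζ ∈ ℂ with ζ ∉ [c,∞). Then for every real x ≥ c one has (x + 1)²/|x − ζ|² ≤ (c + 2)²·ρ(ζ). -/
/-- The quantity `ρ(ζ)` from the paper: `ρ(ζ) = c(ψ)² |ζ − c|⁻²` if `|ζ − c| < 1`, and
`ρ(ζ) = c(ψ)²` if `|ζ − c| ≥ 1`, where `ψ = arg(ζ − c) ∈ (0, 2π)`. -/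
noncomputable def rhoFlat (c : ℝ) (ζ : ℂ) (ψ : ℝ) : ℝ :=
  if ‖ζ - (c : ℂ)‖ < 1 then cArg ψ ^ 2 * (‖ζ - (c : ℂ)‖)⁻¹ ^ 2
  else cArg ψ ^ 2

/-!
Put `w = ζ - c`, `t = x - c ≥ 0`, `a = c + 1` and `m = min ‖w‖ 1`, so that
`ρ(ζ) = (c(ψ) / m)²`; the claim becomes `m (t + a) ≤ (a + 1) c(ψ) ‖t - w‖`.
If `cos ψ > 0`, the identity `Im ((w + a) · conj (t - w)) = Im w · (t + a)` gives
`|Im w| (t + a) ≤ ‖w + a‖ ‖t - w‖ ≤ (‖w‖ + a) ‖t - w‖`, and `|Im w| = ‖w‖ |sin ψ|`.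
If `cos ψ ≤ 0`, then `‖t - w‖² ≥ t² + ‖w‖² ≥ m² (t² + 1)`, and Cauchy–Schwarz gives
`(t + a)² ≤ (a + 1)² (t² + 1)`.
-/

open ComplexConjugate Real Set

theorem abs_im_mul_abs_add_le (w : ℂ) (t a : ℝ) :
    |w.im| * |t + a| ≤ ‖w + a‖ * ‖(t : ℂ) - w‖ := by
  have him : ((w + a) * conj ((t : ℂ) - w)).im = w.im * (t + a) := by
    simp only [Complex.mul_im, Complex.add_re, Complex.add_im, Complex.ofReal_re,
      Complex.ofReal_im, Complex.conj_re, Complex.conj_im, Complex.sub_re, Complex.sub_im]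
    ring
  calc |w.im| * |t + a| = |((w + a) * conj ((t : ℂ) - w)).im| := by rw [him, abs_mul]
    _ ≤ ‖(w + a) * conj ((t : ℂ) - w)‖ := Complex.abs_im_le_norm _
    _ = ‖w + a‖ * ‖(t : ℂ) - w‖ := by rw [norm_mul, Complex.norm_conj]

theorem min_one_mul_add_le {r a : ℝ} (hr : 0 ≤ r) (ha : 0 ≤ a) :
    min r 1 * (r + a) ≤ (a + 1) * r := by
  rcases le_total r 1 with h | h
  · rw [min_eq_left h]; nlinarith
  · rw [min_eq_right h]; nlinarith

theorem min_norm_one_mul_abs_im_mul_le (w : ℂ) {t a : ℝ} (ha : 0 ≤ a) (hta : 0 ≤ t + a) :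
    min ‖w‖ 1 * |w.im| * (t + a) ≤ (a + 1) * ‖w‖ * ‖(t : ℂ) - w‖ := by
  have hwa : ‖w + a‖ ≤ ‖w‖ + a := by
    simpa [Real.norm_eq_abs, abs_of_nonneg ha] using norm_add_le w (a : ℂ)
  calc min ‖w‖ 1 * |w.im| * (t + a) = min ‖w‖ 1 * (|w.im| * |t + a|) := by
        rw [abs_of_nonneg hta, mul_assoc]
    _ ≤ min ‖w‖ 1 * ((‖w‖ + a) * ‖(t : ℂ) - w‖) := by
        refine mul_le_mul_of_nonneg_left ?_ (le_min (norm_nonneg w) zero_le_one)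
        exact (abs_im_mul_abs_add_le w t a).trans (by gcongr)
    _ = min ‖w‖ 1 * (‖w‖ + a) * ‖(t : ℂ) - w‖ := by ring
    _ ≤ (a + 1) * ‖w‖ * ‖(t : ℂ) - w‖ :=
        mul_le_mul_of_nonneg_right (min_one_mul_add_le (norm_nonneg w) ha) (norm_nonneg _)

theorem sq_add_sq_norm_le_sq_norm_sub {w : ℂ} {t : ℝ} (hw : w.re ≤ 0) (ht : 0 ≤ t) :
    t ^ 2 + ‖w‖ ^ 2 ≤ ‖(t : ℂ) - w‖ ^ 2 := by
  simp only [Complex.sq_norm, Complex.normSq_apply, Complex.sub_re, Complex.sub_im,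
    Complex.ofReal_re, Complex.ofReal_im]
  nlinarith [mul_nonneg ht (neg_nonneg.2 hw)]

theorem min_norm_one_mul_le_of_re_nonpos {w : ℂ} {t a : ℝ} (hw : w.re ≤ 0) (ht : 0 ≤ t)
    (ha : 0 ≤ a) : min ‖w‖ 1 * (t + a) ≤ (a + 1) * ‖(t : ℂ) - w‖ := by
  set m := min ‖w‖ 1
  have hm : 0 ≤ m := le_min (norm_nonneg w) zero_le_one
  have hcs : (t + a) ^ 2 ≤ (a + 1) ^ 2 * (t ^ 2 + 1) := by
    nlinarith [sq_nonneg (t * a - 1)]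
  have hmin : m ^ 2 * (t ^ 2 + 1) ≤ t ^ 2 + ‖w‖ ^ 2 := by
    rcases le_total ‖w‖ 1 with h | h
    · rw [show m = ‖w‖ from min_eq_left h]
      nlinarith [mul_le_mul_of_nonneg_left (pow_le_one₀ (n := 2) (norm_nonneg w) h) (sq_nonneg t)]
    · rw [show m = 1 from min_eq_right h]
      nlinarith
  refine pow_le_pow_iff_left₀ (by positivity) (by positivity) two_ne_zero |>.1 ?_
  calc (m * (t + a)) ^ 2 = m ^ 2 * (t + a) ^ 2 := by ring
    _ ≤ m ^ 2 * ((a + 1) ^ 2 * (t ^ 2 + 1)) := by gcongr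
    _ = (a + 1) ^ 2 * (m ^ 2 * (t ^ 2 + 1)) := by ring
    _ ≤ (a + 1) ^ 2 * ‖(t : ℂ) - w‖ ^ 2 := by
        gcongr
        exact hmin.trans (sq_add_sq_norm_le_sq_norm_sub hw ht)
    _ = ((a + 1) * ‖(t : ℂ) - w‖) ^ 2 := by ring

theorem cArg_eq_ite_cos_pos {ψ : ℝ} (hψ : ψ ∈ Ioo 0 (2 * π)) :
    cArg ψ = if 0 < cos ψ then |sin ψ|⁻¹ else 1 := by
  obtain ⟨hψ0, hψ2⟩ := hψ
  have hcond : ((0 < ψ ∧ ψ < π / 2) ∨ (3 * π / 2 < ψ ∧ ψ < 2 * π)) ↔ 0 < cos ψ := by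
    constructor
    · rintro (⟨-, h⟩ | ⟨h, -⟩)
      · exact cos_pos_of_mem_Ioo ⟨by linarith, h⟩
      · rw [← cos_sub_two_pi]
        exact cos_pos_of_mem_Ioo ⟨by linarith, by linarith⟩
    · intro hcos
      by_contra! h
      have hlo : π / 2 ≤ ψ := h.1 hψ0
      have hhi : ψ ≤ π + π / 2 := by
        by_contra! h'
        exact absurd hψ2 (not_lt.2 (h.2 (by linarith)))
      exact (cos_nonpos_of_pi_div_two_le_of_le hlo hhi).not_gt hcos
  simp only [cArg, hcond]

theorem sin_ne_zero_of_cos_pos {ψ : ℝ} (hψ : ψ ∈ Ioo 0 (2 * π)) (hcos : 0 < cos ψ) :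
    sin ψ ≠ 0 := by
  intro hsin
  have hπ : ψ - π = 0 :=
    (sin_eq_zero_iff_of_lt_of_lt (by linarith [hψ.1]) (by linarith [hψ.2])).1
      (by rw [sin_sub_pi, hsin, neg_zero])
  rw [sub_eq_zero.1 hπ, cos_pi] at hcos
  norm_num at hcos

theorem min_norm_one_mul_le_cArg_mul {w : ℂ} {ψ t a : ℝ} (hψ : ψ ∈ Ioo 0 (2 * π))
    (hw : w = ‖w‖ * Complex.exp (ψ * Complex.I)) (ht : 0 ≤ t) (ha : 0 ≤ a) :
    min ‖w‖ 1 * (t + a) ≤ (a + 1) * cArg ψ * ‖(t : ℂ) - w‖ := by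
  rw [cArg_eq_ite_cos_pos hψ]
  split_ifs with hcos
  · have hs : 0 < |sin ψ| := abs_pos.2 (sin_ne_zero_of_cos_pos hψ hcos)
    rcases (norm_nonneg w).eq_or_lt with hr | hr
    · rw [← hr, min_eq_left zero_le_one, zero_mul]
      positivity
    have him : |w.im| = ‖w‖ * |sin ψ| := by
      rw [congrArg Complex.im hw, Complex.im_ofReal_mul, Complex.exp_ofReal_mul_I_im, abs_mul,
        abs_norm]
    have h := min_norm_one_mul_abs_im_mul_le w ha (add_nonneg ht ha)
    rw [him] at h
    rw [mul_right_comm, ← div_eq_mul_inv, le_div_iff₀ hs]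
    refine le_of_mul_le_mul_left ?_ hr
    linarith
  · have hre : w.re = ‖w‖ * cos ψ := by
      rw [congrArg Complex.re hw, Complex.re_ofReal_mul, Complex.exp_ofReal_mul_I_re]
    rw [mul_one]
    refine min_norm_one_mul_le_of_re_nonpos ?_ ht ha
    rw [hre]
    exact mul_nonpos_of_nonneg_of_nonpos (norm_nonneg w) (not_lt.1 hcos)

theorem rhoFlat_eq_div_min_sq (c : ℝ) (ζ : ℂ) (ψ : ℝ) :
    rhoFlat c ζ ψ = (cArg ψ / min ‖ζ - c‖ 1) ^ 2 := by
  unfold rhoFlat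
  split_ifs with h
  · rw [min_eq_left h.le, div_eq_mul_inv, mul_pow]
  · rw [min_eq_right (not_lt.1 h), div_one]

/-- For `c ≥ 0` and `ζ ∈ ℂ \ [c,∞)`, every real `x ≥ c` satisfies
`(x + 1)²/|x − ζ|² ≤ (c + 2)² ρ(ζ)`. -/
theorem sup_add_one_sq_div_abs_sq (c : ℝ) (hc : 0 ≤ c) (ζ : ℂ) (ψ : ℝ)
    (hζ : ∀ x : ℝ, c ≤ x → ζ ≠ (x : ℂ))
    (hψ : ψ ∈ Set.Ioo (0 : ℝ) (2 * Real.pi))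
    (hζψ : ζ - (c : ℂ) = (‖ζ - (c : ℂ)‖ : ℂ) * Complex.exp ((ψ : ℂ) * Complex.I)) :
    ∀ x : ℝ, c ≤ x →
      (x + 1) ^ 2 / ‖(x : ℂ) - ζ‖ ^ 2 ≤ (c + 2) ^ 2 * rhoFlat c ζ ψ := by
  intro x hx
  have hm : 0 < min ‖ζ - c‖ 1 := lt_min (norm_pos_iff.2 (sub_ne_zero.2 (hζ c le_rfl))) one_pos
  have key := min_norm_one_mul_le_cArg_mul hψ hζψ (sub_nonneg.2 hx) (by linarith : 0 ≤ c + 1)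
  rw [show ((x - c : ℝ) : ℂ) - (ζ - c) = x - ζ by push_cast; ring,
    show x - c + (c + 1) = x + 1 by ring, show c + 1 + 1 = c + 2 by ring] at key
  rw [rhoFlat_eq_div_min_sq]
  refine div_le_of_le_mul₀ (by positivity) (by positivity) ?_
  calc (x + 1) ^ 2 ≤ ((c + 2) * cArg ψ * ‖(x : ℂ) - ζ‖ / min ‖ζ - c‖ 1) ^ 2 :=
        pow_le_pow_left₀ (by linarith) ((le_div_iff₀ hm).2 (by linarith)) 2
    _ = (c + 2) ^ 2 * (cArg ψ / min ‖ζ - c‖ 1) ^ 2 * ‖(x : ℂ) - ζ‖ ^ 2 := by ring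
end

section
/- Let A be a unital C*-algebra, let a ∈ A be selfadjoint, and let c ≥ 0 be such that the spectrum of a is contained in [c,∞). Then for every ζ ∈ ℂ with ζ ∉ [c,∞), the element a − ζ·1 is invertible and ‖(a + 1)·(a − ζ·1)⁻¹‖ ≤ (c + 2)·ρ(ζ)^{1/2}. -/
/-!
By the continuous functional calculus, `(a + 1)(a − ζ)⁻¹ = f(a)` with `f z = (z + 1)/(z − ζ)`, so
its norm is at most `sup |f|` over `σ(a) ⊆ [c, ∞)`. Write `x = c + t` and `ζ = c + d e^{iψ}`.
Then `|x − ζ| ≥ max t d / c(ψ)`: `t |sin ψ|` is the distance from `t` to the line `ℝ e^{iψ}` and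
`d |sin ψ|` the distance from `d e^{iψ}` to `ℝ`, while for `cos ψ ≤ 0` the law of cosines gives
`|x − ζ|² ≥ t² + d²`. Together with `(t + c + 1) min 1 d ≤ (c + 2) max t d` this yields
`|f(x)| ≤ (c + 2) c(ψ) / min 1 d = (c + 2) √ρ(ζ)`.
-/

open Complex

lemma cArg_nonneg (ψ : ℝ) : 0 ≤ cArg ψ := by
  unfold cArg
  split_ifs <;> positivity

lemma sqrt_rhoFlat (c : ℝ) (ζ : ℂ) (ψ : ℝ) :
    Real.sqrt (rhoFlat c ζ ψ) = cArg ψ / min 1 ‖ζ - c‖ := by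
  unfold rhoFlat
  split_ifs with h
  · rw [min_eq_right h.le, ← mul_pow, ← div_eq_mul_inv,
      Real.sqrt_sq (div_nonneg (cArg_nonneg ψ) (norm_nonneg _))]
  · rw [min_eq_left (not_lt.1 h), div_one, Real.sqrt_sq (cArg_nonneg ψ)]

lemma norm_ofReal_sub_mul_exp_sq (t r ψ : ℝ) :
    ‖(t : ℂ) - r * exp (ψ * I)‖ ^ 2 = t ^ 2 - 2 * t * r * Real.cos ψ + r ^ 2 := by
  rw [Complex.sq_norm, normSq_apply, exp_mul_I, ← ofReal_cos, ← ofReal_sin]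
  simp only [sub_re, sub_im, mul_re, mul_im, add_re, add_im, ofReal_re, ofReal_im, I_re, I_im]
  nlinarith [Real.sin_sq_add_cos_sq ψ]

lemma abs_sin_mul_max_le_norm_ofReal_sub_mul_exp (t r ψ : ℝ) :
    |Real.sin ψ| * max |t| |r| ≤ ‖(t : ℂ) - r * exp (ψ * I)‖ := by
  refine abs_le_of_sq_le_sq' ?_ (norm_nonneg _) |>.2
  rw [norm_ofReal_sub_mul_exp_sq, mul_pow, sq_abs]
  have hpyth := Real.sin_sq_add_cos_sq ψ
  rcases le_total |t| |r| with h | h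
  · rw [max_eq_right h, sq_abs]
    nlinarith [sq_nonneg (t - r * Real.cos ψ)]
  · rw [max_eq_left h, sq_abs]
    nlinarith [sq_nonneg (t * Real.cos ψ - r)]

lemma max_le_norm_ofReal_sub_mul_exp_of_cos_nonpos {t r ψ : ℝ} (ht : 0 ≤ t) (hr : 0 ≤ r)
    (hψ : Real.cos ψ ≤ 0) : max t r ≤ ‖(t : ℂ) - r * exp (ψ * I)‖ := by
  refine abs_le_of_sq_le_sq' ?_ (norm_nonneg _) |>.2
  rw [norm_ofReal_sub_mul_exp_sq]
  rcases le_total t r with h | h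
  · rw [max_eq_right h]
    nlinarith [mul_nonneg (mul_nonneg ht hr) (neg_nonneg.2 hψ)]
  · rw [max_eq_left h]
    nlinarith [mul_nonneg (mul_nonneg ht hr) (neg_nonneg.2 hψ)]

lemma max_le_cArg_mul_norm_ofReal_sub_mul_exp {t r ψ : ℝ} (ht : 0 ≤ t) (hr : 0 ≤ r)
    (hψ : ψ ∈ Set.Ioo 0 (2 * Real.pi)) :
    max t r ≤ cArg ψ * ‖(t : ℂ) - r * exp (ψ * I)‖ := by
  unfold cArg
  split_ifs with h
  · have hsin : 0 < |Real.sin ψ| := by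
      refine abs_pos.2 ?_
      rcases h with ⟨h0, h1⟩ | ⟨h0, h1⟩
      · exact (Real.sin_pos_of_pos_of_lt_pi h0 (by linarith [Real.pi_pos])).ne'
      · rw [← Real.sin_sub_two_pi]
        exact (Real.sin_neg_of_neg_of_neg_pi_lt (by linarith) (by linarith)).ne
    rw [le_inv_mul_iff₀ hsin]
    simpa [abs_of_nonneg ht, abs_of_nonneg hr] using
      abs_sin_mul_max_le_norm_ofReal_sub_mul_exp t r ψ
  · push Not at h
    have hcos : Real.cos ψ ≤ 0 :=
      Real.cos_nonpos_of_pi_div_two_le_of_le (h.1 hψ.1)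
        (not_lt.1 fun h' ↦ (h.2 (by linarith)).not_gt hψ.2)
    rw [one_mul]
    exact max_le_norm_ofReal_sub_mul_exp_of_cos_nonpos ht hr hcos

lemma add_add_one_mul_min_le {t c : ℝ} (ht : 0 ≤ t) (hc : -1 ≤ c) (d : ℝ) :
    (t + c + 1) * min 1 d ≤ (c + 2) * max t d := by
  have hmd : min 1 d ≤ max t d := (min_le_right 1 d).trans (le_max_right t d)
  rcases le_total 0 (min 1 d) with hm | hm
  · nlinarith [min_le_left 1 d, le_max_left t d]
  · nlinarith [le_max_left t d]

lemma norm_add_one_mul_inv_sub_le {c : ℝ} (hc : -1 ≤ c) {ζ : ℂ} {ψ : ℝ}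
    (hψ : ψ ∈ Set.Ioo 0 (2 * Real.pi)) (hζψ : ζ - c = ‖ζ - c‖ * exp (ψ * I)) (hζc : ζ ≠ c)
    {x : ℝ} (hx : c ≤ x) :
    ‖((x : ℂ) + 1) * ((x : ℂ) - ζ)⁻¹‖ ≤ (c + 2) * (cArg ψ / min 1 ‖ζ - c‖) := by
  set d := ‖ζ - c‖
  have hd : 0 < d := norm_pos_iff.2 (sub_ne_zero.2 hζc : ζ - (c : ℂ) ≠ 0)
  have hdist : max (x - c) d ≤ cArg ψ * ‖(x : ℂ) - ζ‖ := by
    have h := max_le_cArg_mul_norm_ofReal_sub_mul_exp (sub_nonneg.2 hx) hd.le hψ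
    rwa [← hζψ, ofReal_sub, sub_sub_sub_cancel_right] at h
  have hxζ : 0 < ‖(x : ℂ) - ζ‖ :=
    pos_of_mul_pos_right ((lt_max_of_lt_right hd).trans_le hdist) (cArg_nonneg ψ)
  rw [norm_mul, norm_inv, ← div_eq_mul_inv, div_le_iff₀ hxζ,
    show (x : ℂ) + 1 = ((x + 1 : ℝ) : ℂ) by push_cast; rfl, norm_real,
    Real.norm_of_nonneg (by linarith)]
  calc x + 1 = ((x - c) + c + 1) * min 1 d / min 1 d := by field_simp; ring
    _ ≤ (c + 2) * max (x - c) d / min 1 d := by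
      gcongr ?_ / _
      exact add_add_one_mul_min_le (sub_nonneg.2 hx) hc d
    _ ≤ (c + 2) * (cArg ψ * ‖(x : ℂ) - ζ‖) / min 1 d := by gcongr; linarith
    _ = (c + 2) * (cArg ψ / min 1 d) * ‖(x : ℂ) - ζ‖ := by ring

lemma isUnit_sub_smul_one_of_notMem_spectrum {R A : Type*} [CommRing R] [Ring A] [Algebra R A]
    {a : A} {ζ : R} (hζ : ζ ∉ spectrum R a) : IsUnit (a - ζ • (1 : A)) := by
  simpa [Algebra.algebraMap_eq_smul_one] using (spectrum.notMem_iff.1 hζ).neg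

lemma add_one_mul_inverse_sub_smul_one_eq_cfc {A : Type*} [CStarAlgebra A] (a : A)
    [IsStarNormal a] {ζ : ℂ} (hζ : ζ ∉ spectrum ℂ a) :
    (a + 1) * Ring.inverse (a - ζ • (1 : A)) = cfc (fun z : ℂ ↦ (z + 1) * (z - ζ)⁻¹) a := by
  have hne : ∀ z ∈ spectrum ℂ a, z - ζ ≠ 0 := fun z hz h ↦ hζ (sub_eq_zero.1 h ▸ hz)
  have hcont : ContinuousOn (fun z : ℂ ↦ (z - ζ)⁻¹) (spectrum ℂ a) :=
    (continuousOn_id.sub continuousOn_const).inv₀ hne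
  rw [cfc_mul (fun z : ℂ ↦ z + 1) _ a (hg := hcont),
    cfc_inv (fun z : ℂ ↦ z - ζ) a hne, cfc_add_const 1 (fun z : ℂ ↦ z) a,
    cfc_sub (fun z : ℂ ↦ z) (fun _ ↦ ζ) a, cfc_id' ℂ a, cfc_const ζ a,
    map_one, Algebra.algebraMap_eq_smul_one]

/-- In a unital C*-algebra, if `a` is selfadjoint with spectrum contained in `[c,∞)`
(`c ≥ 0`), then for `ζ ∈ ℂ \ [c,∞)` the element `a − ζ·1` is invertible and
`‖(a + 1)(a − ζ·1)⁻¹‖ ≤ (c + 2) ρ(ζ)^{1/2}`. -/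
theorem add_one_mul_resolvent_norm_bound {A : Type*} [CStarAlgebra A]
    (a : A) (ha : IsSelfAdjoint a) (c : ℝ) (hc : 0 ≤ c)
    (hspec : spectrum ℂ a ⊆ Complex.ofReal '' Set.Ici c)
    (ζ : ℂ) (ψ : ℝ)
    (hζ : ∀ x : ℝ, c ≤ x → ζ ≠ (x : ℂ))
    (hψ : ψ ∈ Set.Ioo (0 : ℝ) (2 * Real.pi))
    (hζψ : ζ - (c : ℂ) = (‖ζ - (c : ℂ)‖ : ℂ) * Complex.exp ((ψ : ℂ) * Complex.I)) :
    IsUnit (a - ζ • (1 : A)) ∧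
      ‖(a + 1) * Ring.inverse (a - ζ • (1 : A))‖ ≤ (c + 2) * Real.sqrt (rhoFlat c ζ ψ) := by
  have : IsStarNormal a := ha.isStarNormal
  have hζa : ζ ∉ spectrum ℂ a := fun h ↦ by
    obtain ⟨x, hx, rfl⟩ := hspec h
    exact hζ x hx rfl
  refine ⟨isUnit_sub_smul_one_of_notMem_spectrum hζa, ?_⟩
  rw [add_one_mul_inverse_sub_smul_one_eq_cfc a hζa, sqrt_rhoFlat]
  refine norm_cfc_le (by have := cArg_nonneg ψ; positivity) fun z hz ↦ ?_
  obtain ⟨x, hx, rfl⟩ := hspec hz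
  exact norm_add_one_mul_inv_sub_le (by linarith) hψ hζψ (hζ c le_rfl) hx
end

section
/- Let R be a unital associative algebra over ℂ, let B, B⁰, Q, Q̄ ∈ R, and let ζ, μ ∈ ℂ be such that the four elements B − ζQ, B − μQ, B⁰ − ζQ̄, B⁰ − μQ̄ are invertible in R. Then (B − ζQ)⁻¹ − (B⁰ − ζQ̄)⁻¹ = (B − ζQ)⁻¹·(B − μQ)·[(B − μQ)⁻¹ − (B⁰ − μQ̄)⁻¹]·(B⁰ − μQ̄)·(B⁰ − ζQ̄)⁻¹ + (ζ − μ)·(B − ζQ)⁻¹·(Q − Q̄)·(B⁰ − ζQ̄)⁻¹. -/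
lemma inverse_sub_inverse {R : Type*} [Ring R] {x y : R}
    (hx : IsUnit x) (hy : IsUnit y) :
    Ring.inverse x - Ring.inverse y = Ring.inverse x * (y - x) * Ring.inverse y := by
  rw [mul_sub, sub_mul, mul_assoc, Ring.mul_inverse_cancel _ hy,
    Ring.inverse_mul_cancel _ hx, mul_one, one_mul]

/-- The generalized-resolvent identity: for elements `B, B⁰, Q, Q̄` of a unital associative
`ℂ`-algebra `R` and `ζ, μ ∈ ℂ` such that `B − ζQ`, `B − μQ`, `B⁰ − ζQ̄`, `B⁰ − μQ̄` are
invertible,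
`(B − ζQ)⁻¹ − (B⁰ − ζQ̄)⁻¹
  = (B − ζQ)⁻¹ (B − μQ) [(B − μQ)⁻¹ − (B⁰ − μQ̄)⁻¹] (B⁰ − μQ̄) (B⁰ − ζQ̄)⁻¹
    + (ζ − μ) (B − ζQ)⁻¹ (Q − Q̄) (B⁰ − ζQ̄)⁻¹`. -/
theorem generalized_resolvent_identity {R : Type*} [Ring R] [Algebra ℂ R]
    (B B0 Q Qb : R) (ζ μ : ℂ)
    (h1 : IsUnit (B - ζ • Q)) (h2 : IsUnit (B - μ • Q))
    (h3 : IsUnit (B0 - ζ • Qb)) (h4 : IsUnit (B0 - μ • Qb)) :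
    Ring.inverse (B - ζ • Q) - Ring.inverse (B0 - ζ • Qb)
      = Ring.inverse (B - ζ • Q) * (B - μ • Q) *
          (Ring.inverse (B - μ • Q) - Ring.inverse (B0 - μ • Qb)) *
          (B0 - μ • Qb) * Ring.inverse (B0 - ζ • Qb)
        + (ζ - μ) • (Ring.inverse (B - ζ • Q) * (Q - Qb) * Ring.inverse (B0 - ζ • Qb)) := by
  rw [inverse_sub_inverse h1 h3, inverse_sub_inverse h2 h4]
  have key : (B0 - ζ • Qb) - (B - ζ • Q)
      = ((B0 - μ • Qb) - (B - μ • Q)) + (ζ - μ) • (Q - Qb) := by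
    simp only [smul_sub, sub_smul]
    abel
  rw [key]
  have c1 : Ring.inverse (B - ζ • Q) * (B - μ • Q) * Ring.inverse (B - μ • Q)
      = Ring.inverse (B - ζ • Q) := by
    rw [mul_assoc, Ring.mul_inverse_cancel _ h2, mul_one]
  have c2 : Ring.inverse (B0 - μ • Qb) * (B0 - μ • Qb) = 1 :=
    Ring.inverse_mul_cancel _ h4
  calc Ring.inverse (B - ζ • Q) * ((B0 - μ • Qb - (B - μ • Q)) + (ζ - μ) • (Q - Qb)) *
        Ring.inverse (B0 - ζ • Qb)
      = Ring.inverse (B - ζ • Q) * (B0 - μ • Qb - (B - μ • Q)) * Ring.inverse (B0 - ζ • Qb)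
        + (ζ - μ) • (Ring.inverse (B - ζ • Q) * (Q - Qb) * Ring.inverse (B0 - ζ • Qb)) := by
        rw [mul_add, add_mul, mul_smul_comm, smul_mul_assoc]
    _ = Ring.inverse (B - ζ • Q) * (B - μ • Q) *
          (Ring.inverse (B - μ • Q) * (B0 - μ • Qb - (B - μ • Q)) * Ring.inverse (B0 - μ • Qb)) *
          (B0 - μ • Qb) * Ring.inverse (B0 - ζ • Qb)
        + (ζ - μ) • (Ring.inverse (B - ζ • Q) * (Q - Qb) * Ring.inverse (B0 - ζ • Qb)) := by
        congr 1
        rw [show Ring.inverse (B - ζ • Q) * (B - μ • Q) *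
          (Ring.inverse (B - μ • Q) * (B0 - μ • Qb - (B - μ • Q)) * Ring.inverse (B0 - μ • Qb)) *
          (B0 - μ • Qb) * Ring.inverse (B0 - ζ • Qb)
          = (Ring.inverse (B - ζ • Q) * (B - μ • Q) * Ring.inverse (B - μ • Q)) *
            (B0 - μ • Qb - (B - μ • Q)) *
            ((Ring.inverse (B0 - μ • Qb) * (B0 - μ • Qb)) * Ring.inverse (B0 - ζ • Qb))
          from by noncomm_ring, c1, c2, one_mul]
end

section
/- Let R be a unital associative algebra over ℂ, let B, B⁰, Q, Q̄, L ∈ R, and let ζ, μ ∈ ℂ be such that u(ζ) := B − ζQ, u(μ) := B − μQ, v(ζ) := B⁰ − ζQ̄, v(μ) := B⁰ − μQ̄ are all invertible in R. Define K(η) := L·v(η)⁻¹ for η ∈ {ζ, μ}. Then u(ζ)⁻¹ − v(ζ)⁻¹ − K(ζ) = [u(μ)⁻¹ − v(μ)⁻¹ − K(μ)]·v(μ)·v(ζ)⁻¹ + (ζ − μ)·u(ζ)⁻¹·Q·[u(μ)⁻¹ − v(μ)⁻¹]·v(μ)·v(ζ)⁻¹ + (ζ − μ)·u(ζ)⁻¹·(Q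 − Q̄)·v(ζ)⁻¹. -/
set_option maxHeartbeats 1000000 in
/-- The generalized-resolvent identity with corrector: for elements `B, B⁰, Q, Q̄, L` of a
unital associative `ℂ`-algebra `R` and `ζ, μ ∈ ℂ` with `u(ζ) = B − ζQ`, `u(μ) = B − μQ`,
`v(ζ) = B⁰ − ζQ̄`, `v(μ) = B⁰ − μQ̄` all invertible, and `K(η) := L v(η)⁻¹`, one has
`u(ζ)⁻¹ − v(ζ)⁻¹ − K(ζ)
  = [u(μ)⁻¹ − v(μ)⁻¹ − K(μ)] v(μ) v(ζ)⁻¹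
    + (ζ − μ) u(ζ)⁻¹ Q [u(μ)⁻¹ − v(μ)⁻¹] v(μ) v(ζ)⁻¹
    + (ζ − μ) u(ζ)⁻¹ (Q − Q̄) v(ζ)⁻¹`. -/
theorem generalized_resolvent_identity_with_corrector {R : Type*} [Ring R] [Algebra ℂ R]
    (B B0 Q Qb L : R) (ζ μ : ℂ)
    (h1 : IsUnit (B - ζ • Q)) (h2 : IsUnit (B - μ • Q))
    (h3 : IsUnit (B0 - ζ • Qb)) (h4 : IsUnit (B0 - μ • Qb)) :
    Ring.inverse (B - ζ • Q) - Ring.inverse (B0 - ζ • Qb) - L * Ring.inverse (B0 - ζ • Qb)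
      = (Ring.inverse (B - μ • Q) - Ring.inverse (B0 - μ • Qb)
            - L * Ring.inverse (B0 - μ • Qb)) * (B0 - μ • Qb) * Ring.inverse (B0 - ζ • Qb)
        + (ζ - μ) • (Ring.inverse (B - ζ • Q) * Q *
            (Ring.inverse (B - μ • Q) - Ring.inverse (B0 - μ • Qb)) *
            (B0 - μ • Qb) * Ring.inverse (B0 - ζ • Qb))
        + (ζ - μ) • (Ring.inverse (B - ζ • Q) * (Q - Qb) * Ring.inverse (B0 - ζ • Qb)) := by
  set u1 := B - ζ • Q with hu1
  set u2 := B - μ • Q with hu2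
  set v1 := B0 - ζ • Qb with hv1
  set v2 := B0 - μ • Qb with hv2
  set x1 := Ring.inverse u1 with hx1
  set x2 := Ring.inverse u2 with hx2
  set y1 := Ring.inverse v1 with hy1
  set y2 := Ring.inverse v2 with hy2
  have k1 : u1 * x1 = 1 := Ring.mul_inverse_cancel _ h1
  have k2 : u2 * x2 = 1 := Ring.mul_inverse_cancel _ h2
  have k3 : y1 * v1 = 1 := Ring.inverse_mul_cancel _ h3
  have k4 : y2 * v2 = 1 := Ring.inverse_mul_cancel _ h4
  have k5 : u2 = u1 + (ζ - μ) • Q := by rw [hu1, hu2]; module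
  have k6 : v1 = v2 - (ζ - μ) • Qb := by rw [hv1, hv2]; module
  clear_value x1 x2 y1 y2
  clear hx1 hx2 hy1 hy2
  clear_value u1 u2 v1 v2
  clear hu1 hu2 hv1 hv2
  apply h1.mul_left_cancel
  apply h3.mul_right_cancel
  have hL : u1 * (x1 - y1 - L * y1) * v1 = v1 - u1 - u1 * L := by
    calc u1 * (x1 - y1 - L * y1) * v1
        = (u1 * x1) * v1 - u1 * (y1 * v1) - (u1 * L) * (y1 * v1) := by noncomm_ring
      _ = v1 - u1 - u1 * L := by rw [k1, k3]; noncomm_ring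
  have hR : u1 * ((x2 - y2 - L * y2) * v2 * y1
        + (ζ - μ) • (x1 * Q * (x2 - y2) * v2 * y1)
        + (ζ - μ) • (x1 * (Q - Qb) * y1)) * v1 = v1 - u1 - u1 * L := by
    calc u1 * ((x2 - y2 - L * y2) * v2 * y1
            + (ζ - μ) • (x1 * Q * (x2 - y2) * v2 * y1)
            + (ζ - μ) • (x1 * (Q - Qb) * y1)) * v1
        = u1 * x2 * v2 * (y1 * v1) - u1 * (y2 * v2) * (y1 * v1)
            - (u1 * L) * (y2 * v2) * (y1 * v1)
            + (ζ - μ) • ((u1 * x1) * Q * x2 * v2 * (y1 * v1)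
                - (u1 * x1) * Q * (y2 * v2) * (y1 * v1))
            + (ζ - μ) • ((u1 * x1) * (Q - Qb) * (y1 * v1)) := by noncomm_ring
      _ = u1 * x2 * v2 + (ζ - μ) • (Q * x2 * v2) - u1 - u1 * L
            - (ζ - μ) • Q + (ζ - μ) • (Q - Qb) := by
          rw [k1, k3, k4]; noncomm_ring; module
      _ = (u1 + (ζ - μ) • Q) * x2 * v2 - u1 - u1 * L - (ζ - μ) • Qb := by
          noncomm_ring; module
      _ = v2 - (ζ - μ) • Qb - u1 - u1 * L := by rw [← k5, k2, one_mul]; noncomm_ring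
      _ = v1 - u1 - u1 * L := by rw [k6]
  rw [hL, hR]
end

section
/- Let R be a unital associative algebra over ℂ, let B, B⁰, Q, Q̄, T ∈ R, let ε ∈ ℂ, and let ζ, μ ∈ ℂ be such that u(ζ) := B − ζQ, u(μ) := B − μQ, v(ζ) := B⁰ − ζQ̄, v(μ) := B⁰ − μQ̄ are all invertible in R. Then u(ζ)⁻¹ − v(ζ)⁻¹ + ε·u(ζ)⁻¹·T·v(μ)·v(ζ)⁻¹ = u(ζ)⁻¹·u(μ)·[u(μ)⁻¹ − v(μ)⁻¹ + ε·u(μ)⁻¹·T]·v(μ)·v(ζ)⁻¹ + (ζ − μ)·u(ζ)⁻¹·(Q − Q̄)·v(ζ)⁻¹. -/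
/-- The identity for transferring the boundary-layer correction term between spectral points:
for elements `B, B⁰, Q, Q̄, T` of a unital associative `ℂ`-algebra `R`, `ε ∈ ℂ`, and
`ζ, μ ∈ ℂ` with `u(ζ) = B − ζQ`, `u(μ) = B − μQ`, `v(ζ) = B⁰ − ζQ̄`, `v(μ) = B⁰ − μQ̄` all
invertible, one has
`u(ζ)⁻¹ − v(ζ)⁻¹ + ε u(ζ)⁻¹ T v(μ) v(ζ)⁻¹
  = u(ζ)⁻¹ u(μ) [u(μ)⁻¹ − v(μ)⁻¹ + ε u(μ)⁻¹ T] v(μ) v(ζ)⁻¹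
    + (ζ − μ) u(ζ)⁻¹ (Q − Q̄) v(ζ)⁻¹`. -/
theorem boundary_layer_resolvent_identity {R : Type*} [Ring R] [Algebra ℂ R]
    (B B0 Q Qb T : R) (ε ζ μ : ℂ)
    (h1 : IsUnit (B - ζ • Q)) (h2 : IsUnit (B - μ • Q))
    (h3 : IsUnit (B0 - ζ • Qb)) (h4 : IsUnit (B0 - μ • Qb)) :
    Ring.inverse (B - ζ • Q) - Ring.inverse (B0 - ζ • Qb)
        + ε • (Ring.inverse (B - ζ • Q) * T * (B0 - μ • Qb) * Ring.inverse (B0 - ζ • Qb))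
      = Ring.inverse (B - ζ • Q) * (B - μ • Q) *
          (Ring.inverse (B - μ • Q) - Ring.inverse (B0 - μ • Qb)
            + ε • (Ring.inverse (B - μ • Q) * T)) *
          (B0 - μ • Qb) * Ring.inverse (B0 - ζ • Qb)
        + (ζ - μ) • (Ring.inverse (B - ζ • Q) * (Q - Qb) * Ring.inverse (B0 - ζ • Qb)) := by
  set uζ := B - ζ • Q with huζ
  set uμ := B - μ • Q with huμ
  set vζ := B0 - ζ • Qb with hvζ
  set vμ := B0 - μ • Qb with hvμ
  apply h1.mul_left_cancel
  apply h3.mul_right_cancel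
  have c1 : ∀ y : R, uζ * (Ring.inverse uζ * y) = y := fun y => Ring.mul_inverse_cancel_left _ y h1
  have c2 : ∀ y : R, uμ * (Ring.inverse uμ * y) = y := fun y => Ring.mul_inverse_cancel_left _ y h2
  have e3 : Ring.inverse vζ * vζ = 1 := Ring.inverse_mul_cancel _ h3
  have e4 : Ring.inverse vμ * vμ = 1 := Ring.inverse_mul_cancel _ h4
  have key : vζ - uζ = vμ - uμ + (ζ - μ) • (Q - Qb) := by
    rw [huζ, huμ, hvζ, hvμ]
    simp only [smul_sub, sub_smul]
    abel
  have L : uζ * (Ring.inverse uζ - Ring.inverse vζ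
        + ε • (Ring.inverse uζ * T * vμ * Ring.inverse vζ)) * vζ
      = vζ - uζ + ε • (T * vμ) := by
    simp only [mul_add, add_mul, mul_sub, sub_mul, mul_smul_comm, smul_mul_assoc, mul_assoc,
      e3, e4, mul_one, one_mul, c1, c2]
  have Rh : uζ * (Ring.inverse uζ * uμ *
        (Ring.inverse uμ - Ring.inverse vμ + ε • (Ring.inverse uμ * T)) * vμ * Ring.inverse vζ
        + (ζ - μ) • (Ring.inverse uζ * (Q - Qb) * Ring.inverse vζ)) * vζ
      = vμ - uμ + ε • (T * vμ) + (ζ - μ) • (Q - Qb) := by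
    simp only [mul_add, add_mul, mul_sub, sub_mul, mul_smul_comm, smul_mul_assoc, mul_assoc,
      e3, e4, mul_one, one_mul, c1, c2]
  rw [L, Rh, key]
  abel
end
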